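/- arXiv:math/0312286 — 6 statements merged into one kernel-verified Lean document; each statement's English description precedes it below -/
import Mathlib

section
/- Let D be a unital C*-algebra and let s be an isometry in D (i.e., s*s = 1). Define V(a) = s*as. Then for every a in D, the norm of the commutator [a, ss*] equals the maximum of ‖V(a*a) − V(a)*V(a)‖^{1/2} and ‖V(aa*) − V(a)V(a)*‖^{1/2}. -/
lemma smul_one_nonneg' {D : Type*} [CStarAlgebra D] [PartialOrder D] [StarOrderedRing D]
    {t : ℝ} (ht : 0 ≤ t) : (0 : D) ≤ t • 1 := by
  have : t • (1 : D) = star ((Real.sqrt t) • (1 : D)) * ((Real.sqrt t) • (1 : D)) := by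
    simp [smul_smul, Real.mul_self_sqrt ht]
  rw [this]
  exact star_mul_self_nonneg _

lemma norm_add_orth {D : Type*} [CStarAlgebra D] [PartialOrder D] [StarOrderedRing D]
    (p x y : D)
    (hp : p * p = p) (hps : star p = p)
    (hx : p * x * p = x) (hy : (1 - p) * y * (1 - p) = y)
    (hx0 : 0 ≤ x) (hy0 : 0 ≤ y) : ‖x + y‖ = max ‖x‖ ‖y‖ := by
  have hq : (1 - p) * (1 - p) = 1 - p := by
    simp [mul_sub, sub_mul, hp]
  have hqs : star (1 - p) = 1 - p := by simp [hps]
  have norm_idem : ∀ e : D, e * e = e → star e = e → ‖e‖ ≤ 1 := by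
    intro e he hes
    rcases eq_or_ne e 0 with h | h
    · simp [h]
    · have : ‖e‖ * ‖e‖ = ‖e‖ * 1 := by
        rw [mul_one]
        calc ‖e‖ * ‖e‖ = ‖star e * e‖ := (CStarRing.norm_star_mul_self).symm
        _ = ‖e‖ := by rw [hes, he]
      exact le_of_eq (mul_left_cancel₀ (by simpa using h) this)
  have hpn : ‖p‖ ≤ 1 := norm_idem p hp hps
  have hqn : ‖(1 : D) - p‖ ≤ 1 := norm_idem _ hq hqs
  set M := max ‖x‖ ‖y‖ with hM
  have hM0 : 0 ≤ M := le_trans (norm_nonneg x) (le_max_left _ _)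
  apply le_antisymm
  · -- upper bound
    have key : ∀ (e z : D), e * e = e → star e = e → e * z * e = z → 0 ≤ z →
        ‖z‖ ≤ M → z ≤ M • e := by
      intro e z he hes hz hz0 hzM
      have h1 : z ≤ algebraMap ℝ D ‖z‖ := IsSelfAdjoint.le_algebraMap_norm_self hz0.isSelfAdjoint
      have h1' : algebraMap ℝ D ‖z‖ ≤ algebraMap ℝ D M := by
        rw [← sub_nonneg, ← map_sub, Algebra.algebraMap_eq_smul_one]
        exact smul_one_nonneg' (by linarith)
      have h2 : star e * z * e ≤ star e * algebraMap ℝ D M * e :=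
        star_left_conjugate_le_conjugate (h1.trans h1') e
      rw [hes, hz] at h2
      refine h2.trans (le_of_eq ?_)
      rw [Algebra.algebraMap_eq_smul_one, mul_smul_comm, smul_mul_assoc, mul_one, he]
    have hxM : x ≤ M • p := by
      exact key p x hp hps hx hx0 (le_max_left _ _)
    have hyM : y ≤ M • (1 - p) := key _ y hq hqs hy hy0 (le_max_right _ _)
    have hsum : x + y ≤ algebraMap ℝ D M := by
      calc x + y ≤ M • p + M • (1 - p) := add_le_add hxM hyM
      _ = algebraMap ℝ D M := by rw [← smul_add, add_sub_cancel, Algebra.algebraMap_eq_smul_one]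
    exact (CStarAlgebra.norm_le_iff_le_algebraMap _ hM0 (add_nonneg hx0 hy0)).mpr hsum
  · -- lower bound
    have comp : ∀ (e z : D), ‖e‖ ≤ 1 → ‖e * z * e‖ ≤ ‖z‖ := by
      intro e z he
      calc ‖e * z * e‖ ≤ ‖e * z‖ * ‖e‖ := norm_mul_le _ _
      _ ≤ ‖e‖ * ‖z‖ * ‖e‖ := by gcongr; exact norm_mul_le _ _
      _ ≤ 1 * ‖z‖ * 1 := by gcongr
      _ = ‖z‖ := by ring
    have h1 : ‖x‖ ≤ ‖x + y‖ := by
      have : p * (x + y) * p = x := by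
        rw [mul_add, add_mul, hx]
        have : p * y * p = 0 := by
          conv_lhs => rw [← hy]
          have h1p : p * (1 - p) = 0 := by simp [mul_sub, hp]
          calc p * ((1 - p) * y * (1 - p)) * p
              = (p * (1 - p)) * y * ((1 - p) * p) := by noncomm_ring
          _ = 0 := by rw [h1p]; simp
        rw [this, add_zero]
      calc ‖x‖ = ‖p * (x + y) * p‖ := by rw [this]
      _ ≤ ‖x + y‖ := comp _ _ hpn
    have h2 : ‖y‖ ≤ ‖x + y‖ := by
      have : (1 - p) * (x + y) * (1 - p) = y := by
        rw [mul_add, add_mul, hy]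
        have : (1 - p) * x * (1 - p) = 0 := by
          conv_lhs => rw [← hx]
          have h1p : (1 - p) * p = 0 := by simp [sub_mul, hp]
          calc (1 - p) * (p * x * p) * (1 - p)
              = ((1 - p) * p) * x * (p * (1 - p)) := by noncomm_ring
          _ = 0 := by rw [h1p]; simp
        rw [this, zero_add]
      calc ‖y‖ = ‖(1 - p) * (x + y) * (1 - p)‖ := by rw [this]
      _ ≤ ‖x + y‖ := comp _ _ hqn
    exact max_le h1 h2

/-- For a unital C*-algebra `D`, an isometry `s` (`s*s = 1`), and
`V a = s* a s`, the norm of the commutator `[a, s s*]` equals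
`max ‖V(a*a) − V(a)*V(a)‖^{1/2} ‖V(aa*) − V(a)V(a)*‖^{1/2}`. -/
theorem stmt0 {D : Type*} [CStarAlgebra D] (s : D) (hs : star s * s = 1) (a : D) :
    ‖a * (s * star s) - (s * star s) * a‖ =
      max (Real.sqrt ‖star s * (star a * a) * s - star (star s * a * s) * (star s * a * s)‖)
          (Real.sqrt ‖star s * (a * star a) * s - (star s * a * s) * star (star s * a * s)‖) := by
  rcases subsingleton_or_nontrivial D with hD | hD
  · rw [Subsingleton.elim (a * (s * star s) - (s * star s) * a) (0 : D),
      Subsingleton.elim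
        (star s * (star a * a) * s - star (star s * a * s) * (star s * a * s)) (0 : D),
      Subsingleton.elim
        (star s * (a * star a) * s - (star s * a * s) * star (star s * a * s)) (0 : D)]
    simp
  letI : PartialOrder D := CStarAlgebra.spectralOrder D
  letI : StarOrderedRing D := CStarAlgebra.spectralOrderedRing D
  have hs' : ∀ z : D, star s * (s * z) = z := fun z => by rw [← mul_assoc, hs, one_mul]
  set p : D := s * star s with hpdef
  have hp : p * p = p := by simp [hpdef, mul_assoc, hs']
  have hps : star p = p := by simp [hpdef, mul_assoc]
  set q : D := 1 - p with hqdef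
  have hqs : star q = q := by simp [hqdef, hps]
  have hqp : q * p = 0 := by simp [hqdef, sub_mul, hp]
  have hpq : p * q = 0 := by simp [hqdef, mul_sub, hp]
  have hsn : ‖s‖ = 1 := by
    have h := CStarRing.norm_star_mul_self (x := s)
    rw [hs, norm_one] at h
    nlinarith [norm_nonneg s]
  set x : D := q * a * p with hxdef
  set y : D := p * a * q with hydef
  set g : D := q * (a * s) with hgdef
  set h : D := (star s * a) * q with hhdef
  -- norm equalities
  have hxg : ‖g‖ = ‖x‖ := by
    have h1 : g = x * s := by
      rw [hxdef, hgdef, hpdef]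
      simp [mul_assoc, hs', hs]
    have h2 : x = g * star s := by
      rw [hxdef, hgdef, hpdef]
      simp [mul_assoc]
    apply le_antisymm
    · calc ‖g‖ = ‖x * s‖ := by rw [h1]
      _ ≤ ‖x‖ * ‖s‖ := norm_mul_le _ _
      _ = ‖x‖ := by rw [hsn, mul_one]
    · calc ‖x‖ = ‖g * star s‖ := by rw [← h2]
      _ ≤ ‖g‖ * ‖star s‖ := norm_mul_le _ _
      _ = ‖g‖ := by rw [norm_star, hsn, mul_one]
  have hyh : ‖h‖ = ‖y‖ := by
    have h1 : h = star s * y := by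
      rw [hydef, hhdef, hpdef]
      simp [mul_assoc, hs', hs]
    have h2 : y = s * h := by
      rw [hydef, hhdef, hpdef]
      simp [mul_assoc]
    apply le_antisymm
    · calc ‖h‖ = ‖star s * y‖ := by rw [h1]
      _ ≤ ‖star s‖ * ‖y‖ := norm_mul_le _ _
      _ = ‖y‖ := by rw [norm_star, hsn, one_mul]
    · calc ‖y‖ = ‖s * h‖ := by rw [← h2]
      _ ≤ ‖s‖ * ‖h‖ := norm_mul_le _ _
      _ = ‖h‖ := by rw [hsn, one_mul]
  -- identify the RHS expressions
  have key1 : star s * (star a * a) * s - star (star s * a * s) * (star s * a * s)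
      = star g * g := by
    rw [hgdef, hqdef, hpdef]
    simp only [star_mul, star_sub, star_one, star_star, mul_sub, sub_mul, mul_one, one_mul,
      mul_assoc, hs']
    abel
  have key2 : star s * (a * star a) * s - (star s * a * s) * star (star s * a * s)
      = h * star h := by
    rw [hhdef, hqdef, hpdef]
    simp only [star_mul, star_sub, star_one, star_star, mul_sub, sub_mul, mul_one, one_mul,
      mul_assoc, hs']
    abel
  -- the commutator
  set c : D := a * p - p * a with hcdef
  have hcxy : c = x - y := by
    rw [hcdef, hxdef, hydef, hqdef]
    noncomm_ring
  have hqq : q * q = q := by simp [hqdef, mul_sub, sub_mul, hp]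
  have hxp : x * p = x := by rw [hxdef]; simp only [mul_assoc, hp]
  have hyq : y * q = y := by rw [hydef]; simp only [mul_assoc, hqq]
  have hpx : p * star x = star x := by rw [← hps, ← star_mul, hxp]
  have hqy : q * star y = star y := by rw [← hqs, ← star_mul, hyq]
  have hcc : star c * c = star x * x + star y * y := by
    rw [hcxy, star_sub, sub_mul, mul_sub, mul_sub]
    have hqp' : ∀ z : D, q * (p * z) = 0 := fun z => by rw [← mul_assoc, hqp, zero_mul]
    have hpq' : ∀ z : D, p * (q * z) = 0 := fun z => by rw [← mul_assoc, hpq, zero_mul]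
    have h1 : star x * y = 0 := by
      rw [hxdef, hydef]
      simp only [star_mul, hps, hqs, mul_assoc, hqp', mul_zero]
    have h2 : star y * x = 0 := by
      rw [hxdef, hydef]
      simp only [star_mul, hps, hqs, mul_assoc, hpq', mul_zero]
    rw [h1, h2, sub_zero]
    abel
  have horth : ‖star x * x + star y * y‖ = max ‖star x * x‖ ‖star y * y‖ := by
    apply norm_add_orth p _ _ hp hps
    · have e1 : p * (star x * x) * p = (p * star x) * (x * p) := by noncomm_ring
      rw [e1, hpx, hxp]
    · have e2 : (1 - p) * (star y * y) * (1 - p) = (q * star y) * (y * q) := by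
        rw [← hqdef]; noncomm_ring
      rw [e2, hqy, hyq]
    · exact star_mul_self_nonneg x
    · exact star_mul_self_nonneg y
  have hcnorm : ‖c‖ * ‖c‖ = max (‖x‖ * ‖x‖) (‖y‖ * ‖y‖) := by
    rw [← CStarRing.norm_star_mul_self, hcc, horth,
      CStarRing.norm_star_mul_self, CStarRing.norm_star_mul_self]
  have final : ‖c‖ = max ‖x‖ ‖y‖ := by
    have := congrArg Real.sqrt hcnorm
    rwa [Real.sqrt_mul_self (norm_nonneg c),
      Monotone.map_max (fun u v huv => Real.sqrt_le_sqrt huv),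
      Real.sqrt_mul_self (norm_nonneg x), Real.sqrt_mul_self (norm_nonneg y)] at this
  calc ‖a * (s * star s) - (s * star s) * a‖ = ‖c‖ := by rw [hcdef, hpdef]
  _ = max ‖x‖ ‖y‖ := final
  _ = max (Real.sqrt ‖star s * (star a * a) * s - star (star s * a * s) * (star s * a * s)‖)
        (Real.sqrt ‖star s * (a * star a) * s - (star s * a * s) * star (star s * a * s)‖) := by
    rw [key1, key2, CStarRing.norm_star_mul_self, CStarRing.norm_self_mul_star,
      Real.sqrt_mul_self (norm_nonneg g), Real.sqrt_mul_self (norm_nonneg h), hxg, hyh]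
end

section
/- Let D be a unital C*-algebra, let s be an isometry in D with V(a) = s*as, and let v₁, v₂ be isometries satisfying v₁v₁* + v₂v₂* = 1. Put w₁ = (1 − ss*) + sv₁s* and w₂ = sv₂. Then for all a in D: ‖w₁ a w₁* + w₂ V(a) w₂* − a‖ ≤ ‖[v₁, V(a)]‖ + ‖[v₂, V(a)]‖ + 2‖[a, ss*]‖. -/
/-!
Put `p = ss*`, `c = [a, p]` and `y = s(v₁ - 1)s*`. A direct computation gives
`w₁ a w₁* + w₂ V(a) w₂* - a = (c y* - y c) + ∑ᵢ s [vᵢ, V(a)] vᵢ* s*`,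
and the isometries `s`, `vᵢ` do not change the norms of the last two terms.
Since `y = p y p` and `p c p = 0`, the summands `c y*` and `-y c` are orthogonal
(`x* z = 0 = x z*`), so the norm of their sum is at most
`max ‖c y*‖ ‖y c‖ ≤ ‖y‖ ‖c‖ ≤ 2 ‖c‖`.
The max bound comes from the spectrum: if `a b = 0` then `σ(a + b) ⊆ σ(a) ∪ σ(b) ∪ {0}`,
and for self-adjoint elements the spectral radius is the norm.
-/

open scoped ENNReal

theorem spectrum_add_subset_of_mul_eq_zero {R A : Type*} [Field R] [Ring A] [Algebra R A]
    {a b : A} (hab : a * b = 0) : spectrum R (a + b) ⊆ spectrum R a ∪ spectrum R b ∪ {0} := by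
  intro k hk
  by_contra! h
  simp only [Set.mem_union, Set.mem_singleton_iff, not_or] at h
  obtain ⟨⟨ha, hb⟩, hk0⟩ := h
  rw [spectrum.notMem_iff] at ha hb
  rw [spectrum.mem_iff] at hk
  apply hk
  have hfactor : algebraMap R A k⁻¹ * ((algebraMap R A k - a) * (algebraMap R A k - b)) =
      algebraMap R A k - (a + b) := by
    rw [mul_sub, sub_mul, sub_mul, hab, sub_zero, ← Algebra.commutes k a, sub_sub, ← mul_add,
      ← mul_sub, ← mul_assoc, ← map_mul, inv_mul_cancel₀ hk0, map_one, one_mul]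
  rw [← hfactor]
  exact ((isUnit_iff_ne_zero.mpr (inv_ne_zero hk0)).map _).mul (ha.mul hb)

theorem spectralRadius_add_le_of_mul_eq_zero {𝕜 A : Type*} [NormedField 𝕜] [Ring A]
    [Algebra 𝕜 A] {a b : A} (hab : a * b = 0) :
    spectralRadius 𝕜 (a + b) ≤ max (spectralRadius 𝕜 a) (spectralRadius 𝕜 b) := by
  refine iSup₂_le fun k hk => ?_
  rcases spectrum_add_subset_of_mul_eq_zero hab hk with (hka | hkb) | hk0
  · exact le_max_of_le_left
      (le_iSup₂ (f := fun k (_ : k ∈ spectrum 𝕜 a) => (‖k‖₊ : ℝ≥0∞)) k hka)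
  · exact le_max_of_le_right
      (le_iSup₂ (f := fun k (_ : k ∈ spectrum 𝕜 b) => (‖k‖₊ : ℝ≥0∞)) k hkb)
  · simp [Set.mem_singleton_iff.mp hk0]

theorem IsSelfAdjoint.norm_add_le_max_of_mul_eq_zero {A : Type*} [CStarAlgebra A] {a b : A}
    (ha : IsSelfAdjoint a) (hb : IsSelfAdjoint b) (hab : a * b = 0) :
    ‖a + b‖ ≤ max ‖a‖ ‖b‖ := by
  have h := spectralRadius_add_le_of_mul_eq_zero (𝕜 := ℂ) hab
  rw [(ha.add hb).spectralRadius_eq_nnnorm, ha.spectralRadius_eq_nnnorm,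
    hb.spectralRadius_eq_nnnorm, ← ENNReal.coe_max, ENNReal.coe_le_coe] at h
  exact_mod_cast h

theorem norm_add_le_max_of_star_mul_eq_zero {A : Type*} [CStarAlgebra A] {x y : A}
    (h₁ : star x * y = 0) (h₂ : x * star y = 0) : ‖x + y‖ ≤ max ‖x‖ ‖y‖ := by
  have h₁' : star y * x = 0 := by simpa using congrArg star h₁
  have hsq : star (x + y) * (x + y) = star x * x + star y * y := by
    simp only [star_add, add_mul, mul_add, h₁, h₁', add_zero, zero_add]
  have hdiag : star x * x * (star y * y) = 0 := by
    rw [mul_assoc, ← mul_assoc x, h₂, zero_mul, mul_zero]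
  have h := (IsSelfAdjoint.star_mul_self x).norm_add_le_max_of_mul_eq_zero
    (IsSelfAdjoint.star_mul_self y) hdiag
  rw [← hsq] at h
  simp only [CStarRing.norm_star_mul_self] at h
  rw [mul_self_le_mul_self_iff (norm_nonneg _) (le_max_of_le_left (norm_nonneg _))]
  refine h.trans (max_le ?_ ?_)
  · exact mul_self_le_mul_self (norm_nonneg _) (le_max_left _ _)
  · exact mul_self_le_mul_self (norm_nonneg _) (le_max_right _ _)

section Isometry

variable {A : Type*} [NormedRing A] [StarRing A] [CStarRing A] {s : A}

theorem norm_mul_of_star_mul_self_eq_one (hs : star s * s = 1) (x : A) : ‖s * x‖ = ‖x‖ := by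
  rw [← mul_self_inj (norm_nonneg _) (norm_nonneg _), ← CStarRing.norm_star_mul_self,
    ← CStarRing.norm_star_mul_self, star_mul, mul_assoc, ← mul_assoc (star s), hs, one_mul]

theorem norm_mul_star_of_star_mul_self_eq_one (hs : star s * s = 1) (x : A) :
    ‖x * star s‖ = ‖x‖ := by
  rw [← norm_star, star_mul, star_star, norm_mul_of_star_mul_self_eq_one hs, norm_star]

theorem norm_mul_mul_star_of_star_mul_self_eq_one (hs : star s * s = 1) (x : A) :
    ‖s * x * star s‖ = ‖x‖ := by
  rw [norm_mul_star_of_star_mul_self_eq_one hs, norm_mul_of_star_mul_self_eq_one hs]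

theorem norm_le_one_of_star_mul_self_eq_one (hs : star s * s = 1) : ‖s‖ ≤ 1 := by
  simpa using
    (norm_mul_of_star_mul_self_eq_one hs 1).le.trans (IsStarProjection.norm_le 1 (.one A))

end Isometry

theorem isStarProjection_mul_star_of_star_mul_self_eq_one {R : Type*} [Monoid R] [StarMul R]
    {s : R} (hs : star s * s = 1) : IsStarProjection (s * star s) :=
  ⟨by rw [IsIdempotentElem, mul_assoc, ← mul_assoc (star s), hs, one_mul],
    IsSelfAdjoint.mul_star_self s⟩

theorem IsIdempotentElem.mul_commutator_mul_eq_zero {R : Type*} [Ring R] {p : R}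
    (hp : IsIdempotentElem p) (a : R) : p * (a * p - p * a) * p = 0 := by
  rw [show p * (a * p - p * a) * p = p * a * (p * p) - p * p * a * p by noncomm_ring, hp.eq,
    sub_self]

theorem IsIdempotentElem.mul_commutator_mul_eq_zero_of_mul_eq {R : Type*} [Ring R] {p y : R}
    (hp : IsIdempotentElem p) (hpy : p * y = y) (hyp : y * p = y) (a : R) :
    y * (a * p - p * a) * y = 0 := by
  calc y * (a * p - p * a) * y = y * p * (a * p - p * a) * (p * y) := by rw [hyp, hpy]
    _ = y * (p * (a * p - p * a) * p) * y := by noncomm_ring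
    _ = 0 := by rw [hp.mul_commutator_mul_eq_zero, mul_zero, zero_mul]

theorem IsStarProjection.norm_commutator_mul_star_sub_le {A : Type*} [CStarAlgebra A] {p y : A}
    (hp : IsStarProjection p) (hpy : p * y = y) (hyp : y * p = y) (a : A) :
    ‖(a * p - p * a) * star y - y * (a * p - p * a)‖ ≤ ‖y‖ * ‖a * p - p * a‖ := by
  set c := a * p - p * a
  have hyc : y * c * y = 0 := hp.isIdempotentElem.mul_commutator_mul_eq_zero_of_mul_eq hpy hyp a
  have hyc' : y * star c * y = 0 := by
    have hc : star c = -(star a * p - p * star a) := by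
      simp only [c, star_sub, star_mul, hp.isSelfAdjoint.star_eq, neg_sub]
    rw [hc, mul_neg, neg_mul, hp.isIdempotentElem.mul_commutator_mul_eq_zero_of_mul_eq hpy hyp,
      neg_zero]
  rw [sub_eq_add_neg]
  refine (norm_add_le_max_of_star_mul_eq_zero ?_ ?_).trans (max_le ?_ ?_)
  · rw [star_mul, star_star, mul_neg, show y * star c * (y * c) = y * star c * y * c by
      simp only [mul_assoc], hyc', zero_mul, neg_zero]
  · rw [star_neg, star_mul, mul_neg, show c * star y * (star c * star y) = c * star (y * c * y) by
      simp only [star_mul, mul_assoc], hyc, star_zero, mul_zero, neg_zero]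
  · simpa [mul_comm ‖y‖] using norm_mul_le c (star y)
  · simpa using norm_mul_le y c

theorem cuntz_sum_sub_self_eq {R : Type*} [Ring R] [StarRing R] {s v₁ v₂ : R}
    (hs : star s * s = 1) (hO₂ : v₁ * star v₁ + v₂ * star v₂ = 1) (a : R) :
    ((1 - s * star s) + s * v₁ * star s) * a * star ((1 - s * star s) + s * v₁ * star s) +
        (s * v₂) * (star s * a * s) * star (s * v₂) - a =
      ((a * (s * star s) - s * star s * a) * star (s * (v₁ - 1) * star s) -
          s * (v₁ - 1) * star s * (a * (s * star s) - s * star s * a)) +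
        (s * ((v₁ * (star s * a * s) - star s * a * s * v₁) * star v₁) * star s +
          s * ((v₂ * (star s * a * s) - star s * a * s * v₂) * star v₂) * star s) := by
  have hs' (x : R) : star s * (s * x) = x := by rw [← mul_assoc, hs, one_mul]
  have hO₂' (x : R) : v₂ * (star v₂ * x) = x - v₁ * (star v₁ * x) := by
    rw [eq_sub_iff_add_eq', ← mul_assoc, ← mul_assoc, ← add_mul, hO₂, one_mul]
  simp only [star_add, star_sub, star_mul, star_one, star_star, sub_mul, mul_sub, add_mul, mul_add,
    mul_one, one_mul, mul_assoc, hs', hO₂']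
  abel

/-- With `V a = s* a s`, `w₁ = (1 − ss*) + s v₁ s*`, `w₂ = s v₂`,
one has `‖w₁ a w₁* + w₂ V(a) w₂* − a‖ ≤ ‖[v₁, V(a)]‖ + ‖[v₂, V(a)]‖ + 2‖[a, ss*]‖`. -/
theorem stmt2 {D : Type*} [CStarAlgebra D] (s v₁ v₂ : D)
    (hs : star s * s = 1) (hv₁ : star v₁ * v₁ = 1) (hv₂ : star v₂ * v₂ = 1)
    (hO₂ : v₁ * star v₁ + v₂ * star v₂ = 1) (a : D) :
    ‖((1 - s * star s) + s * v₁ * star s) * a * star ((1 - s * star s) + s * v₁ * star s) +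
        (s * v₂) * (star s * a * s) * star (s * v₂) - a‖ ≤
      ‖v₁ * (star s * a * s) - (star s * a * s) * v₁‖ +
      ‖v₂ * (star s * a * s) - (star s * a * s) * v₂‖ +
      2 * ‖a * (s * star s) - (s * star s) * a‖ := by
  rw [cuntz_sum_sub_self_eq hs hO₂]
  set V := star s * a * s
  set p := s * star s
  set y := s * (v₁ - 1) * star s
  have hpy : p * y = y := by simp only [p, y, mul_assoc, ← mul_assoc (star s) s, hs, one_mul]
  have hyp : y * p = y := by simp only [p, y, mul_assoc, ← mul_assoc (star s) s, hs, one_mul]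
  have hy : ‖y‖ ≤ 2 := by
    rw [norm_mul_mul_star_of_star_mul_self_eq_one hs]
    calc ‖v₁ - 1‖ ≤ ‖v₁‖ + ‖(1 : D)‖ := norm_sub_le _ _
      _ ≤ 1 + 1 := add_le_add (norm_le_one_of_star_mul_self_eq_one hv₁)
          (IsStarProjection.norm_le 1 (.one D))
      _ = 2 := one_add_one_eq_two
  have hE {v : D} (hv : star v * v = 1) :
      ‖s * ((v * V - V * v) * star v) * star s‖ = ‖v * V - V * v‖ := by
    rw [norm_mul_mul_star_of_star_mul_self_eq_one hs, norm_mul_star_of_star_mul_self_eq_one hv]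
  have hcomm := IsStarProjection.norm_commutator_mul_star_sub_le
    (isStarProjection_mul_star_of_star_mul_self_eq_one hs) hpy hyp a
  calc _ ≤ _ + (_ + _) := (norm_add_le _ _).trans (add_le_add le_rfl (norm_add_le _ _))
    _ ≤ 2 * ‖a * p - p * a‖ + (‖v₁ * V - V * v₁‖ + ‖v₂ * V - V * v₂‖) := by
      rw [hE hv₁, hE hv₂]
      gcongr
      exact hcomm.trans (mul_le_mul_of_nonneg_right hy (norm_nonneg _))
    _ = _ := by ring
end

section
/- For each ε > 0 and each natural number n ≥ 2, there is a continuous retraction F from X_{ε,n} onto Γ_{ε,n} satisfying ‖F(t) − t‖_∞ ≤ ε for all t ∈ X_{ε,n}. Here Γ_{ε,n} is the set of points t = (t₁,…,tₙ) in ℝⁿ such that tⱼ ∈ εℤ for all but at most one index j, and X_{ε,n} is the set of t in ℝⁿ such that at most one coordinate tⱼ lies in (ℤ + 1/2)ε. -/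
/-!
After rescaling, `ε = 1`. Let `dⱼ(t)` be the sup-distance from `t` to the lines parallel to the
`j`-th axis through the points of `ℤⁿ`, and replace `tⱼ` by `snap dⱼ(t) tⱼ`, which collapses the
`dⱼ(t)`-neighbourhood of every integer onto that integer and stretches the rest linearly. Since
`|tₖ - round tₖ| ≤ dⱼ(t)` for `k ≠ j`, two coordinates `j ≠ k` can both stay non-integral only if
each of `|tⱼ - round tⱼ|`, `|tₖ - round tₖ|` exceeds the other. On `Γ`, `dⱼ(t) = 0` whenever `tⱼ`
is not an integer, so nothing moves. Finally `(σ, x) ↦ snap σ x` is continuous except where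
`σ = 1/2` and `x` is a half-integer, and `dⱼ(t) = 1/2` forces some `tₖ`, `k ≠ j`, to be a
half-integer, so this never happens on `X` at a half-integer `tⱼ`.
-/

open Set Topology Metric Function

noncomputable section

def softThreshold (σ u : ℝ) : ℝ := max (u - σ) 0 + min (u + σ) 0

lemma softThreshold_eq_zero {σ u : ℝ} (h : |u| ≤ σ) : softThreshold σ u = 0 := by
  rw [abs_le] at h
  rw [softThreshold, max_eq_right (by linarith), min_eq_right (by linarith), add_zero]

lemma softThreshold_zero_left (u : ℝ) : softThreshold 0 u = u := by
  rw [softThreshold, sub_zero, add_zero, max_add_min, add_zero]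

lemma softThreshold_half {σ : ℝ} (h : |σ| ≤ 1 / 2) : softThreshold σ (1 / 2) = 1 / 2 - σ := by
  rw [abs_le] at h
  rw [softThreshold, max_eq_left (by linarith), min_eq_right (by linarith), add_zero]

lemma softThreshold_neg_half {σ : ℝ} (h : |σ| ≤ 1 / 2) :
    softThreshold σ (-(1 / 2)) = σ - 1 / 2 := by
  rw [abs_le] at h
  rw [softThreshold, max_eq_right (by linarith), min_eq_left (by linarith), zero_add]
  ring

lemma softThreshold_div_mem_uIcc {σ u : ℝ} (hσ : 0 ≤ σ) (hu : |u| ≤ 1 / 2) :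
    softThreshold σ u / (1 - 2 * σ) ∈ uIcc 0 u := by
  rcases le_or_gt |u| σ with h | h
  · rw [softThreshold_eq_zero h, zero_div]
    exact left_mem_uIcc
  have hd : 0 < 1 - 2 * σ := by linarith
  rcases le_total 0 u with hu0 | hu0
  · rw [abs_of_nonneg hu0] at h hu
    rw [uIcc_of_le hu0, softThreshold, max_eq_left (by linarith), min_eq_right (by linarith),
      add_zero]
    exact ⟨div_nonneg (by linarith) hd.le, (div_le_iff₀ hd).2 (by nlinarith)⟩
  · rw [abs_of_nonpos hu0] at h hu
    rw [uIcc_of_ge hu0, softThreshold, max_eq_right (by linarith), min_eq_left (by linarith),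
      zero_add]
    exact ⟨(le_div_iff₀ hd).2 (by nlinarith), div_nonpos_of_nonpos_of_nonneg (by linarith) hd.le⟩

/-- For `0 ≤ σ < 1/2`, `snap σ` collapses each interval `[m - σ, m + σ]` around an integer `m`
onto `m` and stretches the gaps in between linearly onto the gaps between the integers;
for `σ ≥ 1/2` it is `round` (the division by `1 - 2σ` then only ever sees a zero numerator). -/
def snap (σ x : ℝ) : ℝ := round x + softThreshold σ (x - round x) / (1 - 2 * σ)

lemma snap_eq_round {σ x : ℝ} (h : |x - round x| ≤ σ) : snap σ x = round x := by
  rw [snap, softThreshold_eq_zero h, zero_div, add_zero]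

lemma snap_intCast {σ : ℝ} (hσ : 0 ≤ σ) (m : ℤ) : snap σ m = m := by
  rw [snap_eq_round (by simpa using hσ), round_intCast]

lemma snap_zero_left (x : ℝ) : snap 0 x = x := by
  rw [snap, softThreshold_zero_left]
  ring

lemma abs_snap_sub_le {σ : ℝ} (hσ : 0 ≤ σ) (x : ℝ) : |snap σ x - x| ≤ 1 / 2 :=
  calc |snap σ x - x|
      = |(x - round x) - softThreshold σ (x - round x) / (1 - 2 * σ)| := by
        rw [snap, abs_sub_comm]; ring_nf
    _ ≤ |(x - round x) - 0| :=
        abs_sub_right_of_mem_uIcc (softThreshold_div_mem_uIcc hσ (abs_sub_round x))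
    _ ≤ 1 / 2 := by rw [sub_zero]; exact abs_sub_round x

lemma sub_round_eq_fract_add_half (x : ℝ) : x - round x = Int.fract (x + 1 / 2) - 1 / 2 := by
  rw [round_eq, ← Int.self_sub_floor]
  ring

lemma abs_sub_round_lt_half {x : ℝ} (h : ∀ m : ℤ, x ≠ m + 1 / 2) : |x - round x| < 1 / 2 := by
  refine (abs_sub_round x).lt_of_ne fun habs => h (round x - 1) ?_
  have hx := round_eq_iff.1 (rfl : round x = round x)
  rcases abs_eq (by norm_num : (0 : ℝ) ≤ 1 / 2) |>.1 habs with h' | h'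
  · linarith [hx.2]
  · push_cast; linarith

/-- For `|σ| < c < 1/2`, `snap σ x - x` is a continuous function of `σ` and of `fract (x + 1/2)`
taking the same value at `0` and `1`. -/
lemma continuousAt_uncurry_snap_of_abs_lt {σ x : ℝ} (hσ : |σ| < 1 / 2) :
    ContinuousAt (uncurry snap) (σ, x) := by
  obtain ⟨c, hσc, hc⟩ := exists_between hσ
  let clip : ℝ → ℝ := fun s => max (-c) (min s c)
  let f : ℝ → ℝ → ℝ := fun s v =>
    softThreshold (clip s) (v - 1 / 2) / (1 - 2 * clip s) - (v - 1 / 2)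
  have hclip : ∀ s, |clip s| ≤ c := fun s =>
    abs_le.2 ⟨le_max_left _ _, max_le (by linarith [abs_nonneg σ]) (min_le_right _ _)⟩
  have hd : ∀ s, 1 - 2 * clip s ≠ 0 := fun s => by linarith [(abs_le.1 (hclip s)).2]
  have hf : Continuous (uncurry f) := by
    refine .sub (.div ?_ (by fun_prop) fun p => hd p.1) (by fun_prop)
    simp only [clip, softThreshold]
    fun_prop
  have hperiodic : ∀ s, f s 0 = f s 1 := by
    intro s
    have hs : |clip s| ≤ 1 / 2 := (hclip s).trans hc.le
    have hd' := hd s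
    simp only [f]
    rw [zero_sub, softThreshold_neg_half hs, show (1 : ℝ) - 1 / 2 = 1 / 2 by norm_num,
      softThreshold_half hs,
      div_eq_of_eq_mul hd' (by ring : clip s - 1 / 2 = -(1 / 2) * (1 - 2 * clip s)),
      div_eq_of_eq_mul hd' (by ring : 1 / 2 - clip s = 1 / 2 * (1 - 2 * clip s))]
    norm_num
  have hsnap : ∀ s y, |s| < c → snap s y = y + f s (Int.fract (y + 1 / 2)) := by
    intro s y hs
    have : clip s = s := by
      rw [abs_lt] at hs
      simp only [clip]; rw [min_eq_left hs.2.le, max_eq_right hs.1.le]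
    simp only [f, this, snap, ← sub_round_eq_fract_add_half]
    ring
  have hcont : Continuous fun p : ℝ × ℝ => p.2 + f p.1 (Int.fract (p.2 + 1 / 2)) :=
    continuous_snd.add ((hf.continuousOn.comp_fract' hperiodic).comp
      (continuous_fst.prodMk (continuous_snd.add continuous_const)))
  refine hcont.continuousAt.congr ?_
  filter_upwards [(isOpen_lt (continuous_abs.comp continuous_fst) continuous_const).mem_nhds
    (show |(σ, x).1| < c from hσc)] with p hp
  exact (hsnap p.1 p.2 hp).symm

lemma continuousAt_uncurry_snap_of_abs_sub_round_lt {σ x : ℝ} (hx : |x - round x| < 1 / 2)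
    (hσ : |x - round x| < σ) : ContinuousAt (uncurry snap) (σ, x) := by
  have hround : ∀ᶠ y in 𝓝 x, round y = round x := by
    rw [abs_lt] at hx
    filter_upwards [Ioo_mem_nhds (by linarith : (round x : ℝ) - 1 / 2 < x)
      (by linarith : x < round x + 1 / 2)] with y hy
    exact round_eq_iff.2 (Ioo_subset_Ico_self hy)
  have hclose : ∀ᶠ p in 𝓝 (σ, x), |p.2 - (round x : ℝ)| < p.1 :=
    (isOpen_lt ((continuous_snd.sub continuous_const).abs) continuous_fst).mem_nhds hσ
  refine (continuousAt_const (y := (round x : ℝ))).congr ?_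
  filter_upwards [hclose, (continuous_snd.tendsto (σ, x)).eventually hround] with p hp hp'
  show _ = snap p.1 p.2
  rw [snap_eq_round (by rw [hp']; exact hp.le), hp']

section Retraction

variable {ι : Type*}

def intLines (j : ι) : Set (ι → ℝ) := {s | ∀ k ≠ j, ∃ m : ℤ, s k = m}

def halfIntCoords (t : ι → ℝ) : Set ι := {j | ∃ m : ℤ, t j = m + 1 / 2}

def nonIntCoords (t : ι → ℝ) : Set ι := {j | ∀ m : ℤ, t j ≠ m}

lemma halfIntCoords_inv_smul {ε : ℝ} (hε : ε ≠ 0) (t : ι → ℝ) :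
    halfIntCoords (ε⁻¹ • t) = {j | ∃ m : ℤ, t j = ε * (m + 1 / 2)} := by
  simp only [halfIntCoords, Pi.smul_apply, smul_eq_mul, inv_mul_eq_iff_eq_mul₀ hε]

lemma nonIntCoords_inv_smul {ε : ℝ} (hε : ε ≠ 0) (t : ι → ℝ) :
    nonIntCoords (ε⁻¹ • t) = {j | ∀ m : ℤ, t j ≠ ε * m} := by
  simp only [nonIntCoords, Pi.smul_apply, smul_eq_mul, ne_eq, inv_mul_eq_iff_eq_mul₀ hε]

variable [Fintype ι]

def snapRetraction (t : ι → ℝ) : ι → ℝ := fun j => snap (infDist t (intLines j)) (t j)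

lemma abs_sub_round_le_infDist_intLines {j k : ι} (hk : k ≠ j) (t : ι → ℝ) :
    |t k - round (t k)| ≤ infDist t (intLines j) := by
  refine (le_infDist ⟨0, fun k _ => ⟨0, by simp⟩⟩).2 fun s hs => ?_
  obtain ⟨m, hm⟩ := hs k hk
  calc |t k - round (t k)| ≤ |t k - m| := round_le _ _
    _ = dist (t k) (s k) := by rw [hm, Real.dist_eq]
    _ ≤ dist t s := dist_le_pi_dist t s k

lemma exists_halfIntCoords_of_half_le_infDist {j : ι} {t : ι → ℝ}
    (h : 1 / 2 ≤ infDist t (intLines j)) : ∃ k ≠ j, k ∈ halfIntCoords t := by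
  classical
  by_contra! hne
  let r : ι → ℝ := update (fun k => round (t k)) j (t j)
  have hr : r ∈ intLines j := fun k hk => ⟨round (t k), update_of_ne hk _ _⟩
  have hdist : dist t r < 1 / 2 := by
    refine (dist_pi_lt_iff (by norm_num)).2 fun k => ?_
    rcases eq_or_ne k j with rfl | hk
    · simp [r]
    · simp only [r, update_of_ne hk, Real.dist_eq]
      exact abs_sub_round_lt_half fun m hm => hne k hk ⟨m, hm⟩
  exact (infDist_le_dist_of_mem hr).trans_lt hdist |>.not_ge h

theorem continuousOn_snapRetraction :
    ContinuousOn (snapRetraction (ι := ι)) {t | (halfIntCoords t).Subsingleton} := by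
  refine continuousOn_pi.2 fun j t ht => ?_
  have hcont : Continuous fun t : ι → ℝ => (infDist t (intLines j), t j) :=
    (continuous_infDist_pt _).prodMk (continuous_apply j)
  suffices ContinuousAt (uncurry snap) (infDist t (intLines j), t j) from
    ContinuousAt.comp_continuousWithinAt (f := fun t : ι → ℝ => (infDist t (intLines j), t j))
      this hcont.continuousWithinAt
  rcases lt_or_ge (infDist t (intLines j)) (1 / 2) with h | h
  · exact continuousAt_uncurry_snap_of_abs_lt (by rwa [abs_of_nonneg infDist_nonneg])
  · obtain ⟨k, hkj, hk⟩ := exists_halfIntCoords_of_half_le_infDist h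
    have hj : |t j - round (t j)| < 1 / 2 :=
      abs_sub_round_lt_half fun m hm => hkj (ht hk ⟨m, hm⟩)
    exact continuousAt_uncurry_snap_of_abs_sub_round_lt hj (hj.trans_le h)

theorem nonIntCoords_snapRetraction_subsingleton (t : ι → ℝ) :
    (nonIntCoords (snapRetraction t)).Subsingleton := by
  have hlt : ∀ j ∈ nonIntCoords (snapRetraction t),
      infDist t (intLines j) < |t j - round (t j)| :=
    fun j hj => lt_of_not_ge fun h => hj (round (t j)) (snap_eq_round h)
  intro j hj k hk
  by_contra hjk
  linarith [hlt j hj, hlt k hk, abs_sub_round_le_infDist_intLines hjk t,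
    abs_sub_round_le_infDist_intLines (Ne.symm hjk) t]

theorem snapRetraction_eq_self {t : ι → ℝ} (ht : (nonIntCoords t).Subsingleton) :
    snapRetraction t = t := by
  funext j
  by_cases hj : j ∈ nonIntCoords t
  · have hline : t ∈ intLines j := fun k hk => by
      by_contra! h
      exact hk (ht h hj)
    rw [snapRetraction, infDist_zero_of_mem hline, snap_zero_left]
  · obtain ⟨m, hm⟩ : ∃ m : ℤ, t j = m := by simpa [nonIntCoords] using hj
    rw [snapRetraction, hm, snap_intCast infDist_nonneg]

theorem norm_snapRetraction_sub_le (t : ι → ℝ) : ‖snapRetraction t - t‖ ≤ 1 / 2 :=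
  (pi_norm_le_iff_of_nonneg (by norm_num)).2 fun j => abs_snap_sub_le infDist_nonneg (t j)

end Retraction

end

theorem stmt5_general (ε : ℝ) (hε : 0 < ε) (n : ℕ) :
    ∃ F : (Fin n → ℝ) → (Fin n → ℝ),
      ContinuousOn F {t : Fin n → ℝ | Set.Subsingleton {j | ∃ m : ℤ, t j = ε * (m + 1/2)}} ∧
      Set.MapsTo F {t : Fin n → ℝ | Set.Subsingleton {j | ∃ m : ℤ, t j = ε * (m + 1/2)}}
        {t : Fin n → ℝ | Set.Subsingleton {j | ∀ m : ℤ, t j ≠ ε * m}} ∧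
      (∀ t ∈ {t : Fin n → ℝ | Set.Subsingleton {j | ∀ m : ℤ, t j ≠ ε * m}}, F t = t) ∧
      (∀ t ∈ {t : Fin n → ℝ | Set.Subsingleton {j | ∃ m : ℤ, t j = ε * (m + 1/2)}},
        ‖F t - t‖ ≤ ε) := by
  simp only [← halfIntCoords_inv_smul hε.ne', ← nonIntCoords_inv_smul hε.ne']
  refine ⟨fun t => ε • snapRetraction (ε⁻¹ • t), ?_, fun t _ => ?_, fun t ht => ?_, fun t _ => ?_⟩
  · exact (continuousOn_const (c := ε)).smul ((continuousOn_snapRetraction (ι := Fin n)).comp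
      (continuous_const_smul ε⁻¹).continuousOn fun _ ht => ht)
  · simpa only [mem_ofPred_eq, inv_smul_smul₀ hε.ne'] using
      nonIntCoords_snapRetraction_subsingleton (ε⁻¹ • t)
  · simp only [snapRetraction_eq_self ht, smul_inv_smul₀ hε.ne']
  · calc ‖ε • snapRetraction (ε⁻¹ • t) - t‖
        = ε * ‖snapRetraction (ε⁻¹ • t) - ε⁻¹ • t‖ := by
          rw [← norm_smul_of_nonneg hε.le, smul_sub, smul_inv_smul₀ hε.ne']
      _ ≤ ε * (1 / 2) := by gcongr; exact norm_snapRetraction_sub_le _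
      _ ≤ ε := by linarith

/-- For every `ε > 0` and `n ≥ 2` there is a continuous retraction
`F : X_{ε,n} → Γ_{ε,n}` moving no point by more than `ε` in the sup-norm, where
`Γ_{ε,n}` consists of the points of `ℝⁿ` having all but at most one coordinate in `εℤ`,
and `X_{ε,n}` consists of the points having at most one coordinate in `(ℤ + 1/2)ε`. -/
theorem stmt5 (ε : ℝ) (hε : 0 < ε) (n : ℕ) (hn : 2 ≤ n) :
    ∃ F : (Fin n → ℝ) → (Fin n → ℝ),
      ContinuousOn F {t : Fin n → ℝ | Set.Subsingleton {j | ∃ m : ℤ, t j = ε * (m + 1/2)}} ∧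
      Set.MapsTo F {t : Fin n → ℝ | Set.Subsingleton {j | ∃ m : ℤ, t j = ε * (m + 1/2)}}
        {t : Fin n → ℝ | Set.Subsingleton {j | ∀ m : ℤ, t j ≠ ε * m}} ∧
      (∀ t ∈ {t : Fin n → ℝ | Set.Subsingleton {j | ∀ m : ℤ, t j ≠ ε * m}}, F t = t) ∧
      (∀ t ∈ {t : Fin n → ℝ | Set.Subsingleton {j | ∃ m : ℤ, t j = ε * (m + 1/2)}},
        ‖F t - t‖ ≤ ε) :=
  stmt5_general ε hε n
end

section
/- There is no continuous open surjection from the closed unit interval [0,1] onto the square [0,1]². -/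
/-!
Pick `x` with `f x` in the interior of the square and a ball `U` around `x` mapped into that
interior. Viewed in `ℝ²`, `W = f '' U` is open and nonempty, and by compactness its frontier lies
in the image of the two-point sphere bounding `U`. The complement of a countable set in `ℝ²` is
connected, which forces `W` to be dense in `ℝ²`, although it lies in the closed square.
-/

open Set Topology Metric

theorem Continuous.frontier_image_subset_image_frontier {X Y : Type*} [TopologicalSpace X]
    [CompactSpace X] [TopologicalSpace Y] [T2Space Y] {f : X → Y} (hf : Continuous f) {U : Set X}
    (hU : IsOpen U) (hfU : IsOpen (f '' U)) : frontier (f '' U) ⊆ f '' frontier U := by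
  rw [hfU.frontier_eq, hU.frontier_eq,
    ← image_closure_of_isCompact isClosed_closure.isCompact hf.continuousOn]
  rintro _ ⟨⟨y, hy, rfl⟩, hyU⟩
  exact ⟨y, ⟨hy, fun h => hyU ⟨y, h, rfl⟩⟩, rfl⟩

theorem Topology.IsInducing.isOpen_image_of_subset_interior_range {X Y : Type*}
    [TopologicalSpace X] [TopologicalSpace Y] {e : X → Y} (he : IsInducing e) {A : Set X}
    (hA : IsOpen A) (hsub : e '' A ⊆ interior (range e)) : IsOpen (e '' A) := by
  obtain ⟨V, hV, rfl⟩ := he.isOpen_iff.mp hA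
  rw [image_preimage_eq_inter_range] at hsub ⊢
  have : V ∩ range e = V ∩ interior (range e) :=
    (subset_inter inter_subset_left hsub).antisymm (inter_subset_inter_right V interior_subset)
  exact this ▸ hV.inter isOpen_interior

theorem IsOpen.dense_of_countable_frontier {E : Type*} [AddCommGroup E] [Module ℝ E]
    [TopologicalSpace E] [ContinuousAdd E] [ContinuousSMul ℝ E] (hE : 1 < Module.rank ℝ E)
    {W : Set E} (hW : IsOpen W) (hne : W.Nonempty) (hfr : (frontier W).Countable) :
    Dense W := by
  obtain ⟨w, hw⟩ := hne
  have hw' : w ∉ frontier W := fun h => (hW.inter_frontier_eq.subset ⟨hw, h⟩ : w ∈ (∅ : Set E))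
  have hsub : (frontier W)ᶜ ⊆ W :=
    (hfr.isConnected_compl_of_one_lt_rank hE).isPreconnected.subset_of_closure_inter_subset hW
      ⟨w, hw', hw⟩ fun y ⟨hyc, hyfr⟩ => by_contra fun hyW => hyfr (hW.frontier_eq ▸ ⟨hyc, hyW⟩)
  refine dense_iff_closure_eq.mpr (eq_univ_of_forall fun y => ?_)
  by_cases hy : y ∈ frontier W
  · exact frontier_subset_closure hy
  · exact subset_closure (hsub hy)

theorem finite_sphere_subtype_real {s : Set ℝ} (x : s) (r : ℝ) : (sphere x r).Finite := by
  rw [← isometry_subtype_coe.preimage_sphere]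
  refine Finite.preimage Subtype.val_injective.injOn ?_
  rcases lt_or_ge r 0 with hr | hr
  · simp [sphere_eq_empty_of_neg hr]
  · simp [Real.sphere_eq_pair _ hr]

/-- There is no continuous open surjection from `[0,1]` onto `[0,1]²`. -/
theorem stmt8 :
    ¬ ∃ f : unitInterval → unitInterval × unitInterval,
        Continuous f ∧ IsOpenMap f ∧ Function.Surjective f := by
  rintro ⟨f, hc, ho, hs⟩
  set e : unitInterval × unitInterval → ℝ × ℝ := Prod.map Subtype.val Subtype.val
  have he : IsInducing e := IsInducing.subtypeVal.prodMap IsInducing.subtypeVal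
  have hef : Continuous (e ∘ f) := he.continuous.comp hc
  have hrange : range e = Icc 0 1 ×ˢ Icc 0 1 := by rw [range_prodMap, Subtype.range_coe]
  obtain ⟨x, hx⟩ : ∃ x, e (f x) ∈ interior (range e) := by
    obtain ⟨x, hx⟩ := hs (⟨1/2, by norm_num, by norm_num⟩, ⟨1/2, by norm_num, by norm_num⟩)
    refine ⟨x, ?_⟩
    rw [hx, hrange, interior_prod_eq, interior_Icc]
    norm_num [e]
  obtain ⟨δ, hδ, hball⟩ := Metric.isOpen_iff.mp (isOpen_interior.preimage hef) x hx
  have hW : IsOpen ((e ∘ f) '' ball x δ) := by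
    rw [image_comp]
    exact he.isOpen_image_of_subset_interior_range (ho _ isOpen_ball)
      (by rwa [← image_comp, image_subset_iff])
  have hfr : (frontier ((e ∘ f) '' ball x δ)).Countable :=
    (((finite_sphere_subtype_real x δ).subset frontier_ball_subset_sphere).image _).countable.mono
      (hef.frontier_image_subset_image_frontier isOpen_ball hW)
  have hdense : Dense (range e) :=
    (hW.dense_of_countable_frontier (by rw [rank_prod', Module.rank_self]; norm_num)
      ⟨_, mem_image_of_mem _ (mem_ball_self hδ)⟩ hfr).mono
      ((image_subset_range _ _).trans (range_comp_subset_range f e))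
  have hfar : ((2 : ℝ), (2 : ℝ)) ∈ range e := by
    rw [← (isCompact_range he.continuous).isClosed.closure_eq, hdense.closure_eq]
    trivial
  rw [hrange] at hfar
  norm_num at hfar
end

section
/- Let B be a C*-algebra and C₁ ⊆ C₂ ⊆ B sub-C*-algebras such that C₁ is regular in C₂ and regular in B. Then C₂ is regular in B. Here a sub-C*-algebra C of a C*-algebra D is regular if for all closed two-sided ideals I, J of D: (1) I ∩ C = J ∩ C implies I = J, and (2) (I + J) ∩ C = (I ∩ C) + (J ∩ C). -/
open Pointwise

/-- A subset `C` of a (topological) ring `D` is a *regular* subalgebra if for all closed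
two-sided ideals `I, J` of `D`: (1) `I ∩ C = J ∩ C` implies `I = J`, and
(2) `(I + J) ∩ C = (I ∩ C) + (J ∩ C)`. -/
def IsRegularIn {D : Type*} [NonUnitalNonAssocRing D] [TopologicalSpace D] (C : Set D) : Prop :=
  (∀ I J : TwoSidedIdeal D, IsClosed (I : Set D) → IsClosed (J : Set D) →
      (I : Set D) ∩ C = (J : Set D) ∩ C → I = J) ∧
  (∀ I J : TwoSidedIdeal D, IsClosed (I : Set D) → IsClosed (J : Set D) →
      ((I : Set D) + (J : Set D)) ∩ C = ((I : Set D) ∩ C) + ((J : Set D) ∩ C))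

/-!
Condition (1) passes from `C₁` to `C₂` because `I ∩ C₁ = (I ∩ C₂) ∩ C₁`. For (2), the closed
ideals `(I ∩ C₂) + (J ∩ C₂)` and `(I + J) ∩ C₂` of `C₂` have the same trace on `C₁`, namely
`(I ∩ C₁) + (J ∩ C₁)` by regularity of `C₁` in `B`; regularity of `C₁` in `C₂` makes them equal.

The analytic input is that a sum of closed ideals in a C⋆-algebra is closed. Functional calculus
on `i⋆i` gives `u ∈ I` with `‖i - iu‖` small and `‖1 - u‖ ≤ 1`, so for `j ∈ J` the element
`ju ∈ I ∩ J` is within `2‖i + j‖` of `j`. Hence every element of `I + J` lifts to `I × J` with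
norm control, and completeness of `I × J` extends such lifts to the closure of `I + J`.
-/

section Unital

variable {E : Type*} [CStarAlgebra E]

lemma norm_sub_mul_cfc_star_mul_self_le (b : E) {f : ℝ → ℝ}
    (hf : ContinuousOn f (spectrum ℝ (star b * b))) {c : ℝ} (hc : 0 ≤ c)
    (h : ∀ t ∈ spectrum ℝ (star b * b), t * (1 - f t) ^ 2 ≤ c ^ 2) :
    ‖b - b * cfc f (star b * b)‖ ≤ c := by
  set a := star b * b
  have hg : ContinuousOn (fun t => 1 - f t) (spectrum ℝ a) := continuousOn_const.sub hf
  have hsub : 1 - cfc f a = cfc (fun t => 1 - f t) a := by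
    rw [cfc_sub _ _ a, cfc_const_one ℝ a]
  have hsq : star (b - b * cfc f a) * (b - b * cfc f a) =
      cfc (fun t => (1 - f t) * t * (1 - f t)) a := by
    rw [cfc_mul (fun t => (1 - f t) * t) (fun t => 1 - f t) a,
      cfc_mul (fun t => 1 - f t) (fun t => t) a, cfc_id' ℝ a, ← hsub, ← mul_one_sub, star_mul,
      star_sub, star_one, (cfc_predicate f a).star_eq]
    simp only [a, mul_assoc]
  refine le_of_sq_le_sq ?_ hc
  rw [sq, ← CStarRing.norm_star_mul_self, hsq]
  refine norm_cfc_le (sq_nonneg c) fun t ht => ?_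
  have ht0 := spectrum_star_mul_self_nonneg t ht
  rw [Real.norm_eq_abs, abs_le]
  constructor <;> nlinarith [h t ht, mul_nonneg ht0 (sq_nonneg (1 - f t))]

lemma norm_one_sub_cfc_le_one {a : E} (ha : IsSelfAdjoint a) {f : ℝ → ℝ}
    (hf : ContinuousOn f (spectrum ℝ a))
    (h : ∀ t ∈ spectrum ℝ a, 0 ≤ f t ∧ f t ≤ 1) :
    ‖1 - cfc f a‖ ≤ 1 := by
  rw [← cfc_const_one ℝ a, ← cfc_sub _ _ a]
  refine norm_cfc_le zero_le_one fun t ht => ?_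
  rw [Real.norm_eq_abs, abs_le]
  constructor <;> linarith [h t ht]

end Unital

lemma mul_one_sub_sq_div_sq_le {δ t : ℝ} (hδ : 0 < δ) (ht : 0 ≤ t) :
    t * (1 - t ^ 2 / (t + δ) ^ 2) ^ 2 ≤ δ := by
  have htδ : 0 < t + δ := by positivity
  have hsub : 1 - t ^ 2 / (t + δ) ^ 2 = δ * (2 * t + δ) / (t + δ) ^ 2 := by
    field_simp
    ring
  rw [hsub, div_pow, mul_div_assoc', div_le_iff₀ (by positivity)]
  have hamgm : t * δ ≤ (t + δ) ^ 2 / 4 := by nlinarith [sq_nonneg (t - δ)]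
  calc t * (δ * (2 * t + δ)) ^ 2 = δ * (t * δ) * (2 * t + δ) ^ 2 := by ring
    _ ≤ δ * ((t + δ) ^ 2 / 4) * (4 * (t + δ) ^ 2) := by gcongr; nlinarith
    _ = δ * ((t + δ) ^ 2) ^ 2 := by ring

/-- The approximate right unit for `z` has the form `z⋆z * v` so that it lies in every ideal
containing `z`; this is why the functional calculus uses `t ↦ t * (t / (t + ε²)²)` rather than
the usual `t ↦ t / (t + ε²)`. -/
lemma exists_norm_sub_mul_star_mul_self_mul_le {A : Type*} [NonUnitalCStarAlgebra A] (z : A)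
    {ε : ℝ} (hε : 0 < ε) :
    ∃ v : A, ‖z - z * (star z * z * v)‖ ≤ ε ∧ ∀ w : A, ‖w - w * (star z * z * v)‖ ≤ ‖w‖ := by
  set δ := ε ^ 2
  have hδ : 0 < δ := by positivity
  set f : ℝ → ℝ := fun t => t ^ 2 / (t + δ) ^ 2
  refine ⟨cfcₙ (fun t => t / (t + δ) ^ 2) (star z * z), ?_⟩
  set a : Unitization ℂ A := star (z : Unitization ℂ A) * z
  have ha : ((star z * z : A) : Unitization ℂ A) = a := by
    rw [Unitization.inr_mul, Unitization.inr_star]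
  have hspec : ∀ t ∈ spectrum ℝ a, 0 ≤ t := fun t ht => spectrum_star_mul_self_nonneg t ht
  have hden : ∀ t ∈ spectrum ℝ a, (t + δ) ^ 2 ≠ 0 := fun t ht => by
    have := hspec t ht
    positivity
  have hf : ContinuousOn f (spectrum ℝ a) := .div (by fun_prop) (by fun_prop) hden
  have hu : ((star z * z * cfcₙ (fun t => t / (t + δ) ^ 2) (star z * z) : A) : Unitization ℂ A) =
      cfc f a := by
    have hfk : f = fun t => t * (t / (t + δ) ^ 2) := funext fun t => by ring
    rw [Unitization.inr_mul, Unitization.real_cfcₙ_eq_cfc_inr _ _ (by simp), ha, hfk,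
      cfc_mul (fun t : ℝ => t) (fun t => t / (t + δ) ^ 2) a continuousOn_id
        (.div (by fun_prop) (by fun_prop) hden), cfc_id' ℝ a]
  constructor
  · rw [← Unitization.norm_inr (𝕜 := ℂ), Unitization.inr_sub, Unitization.inr_mul, hu]
    exact norm_sub_mul_cfc_star_mul_self_le _ hf hε.le fun t ht =>
      mul_one_sub_sq_div_sq_le hδ (hspec t ht)
  · intro w
    have hu1 : ‖1 - cfc f a‖ ≤ 1 := norm_one_sub_cfc_le_one (.star_mul_self _) hf fun t ht => by
      have := hspec t ht
      exact ⟨by positivity, div_le_one_of_le₀ (by nlinarith) (by positivity)⟩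
    rw [← Unitization.norm_inr (𝕜 := ℂ), Unitization.inr_sub, Unitization.inr_mul, hu,
      ← mul_one_sub]
    calc _ ≤ ‖(w : Unitization ℂ A)‖ * ‖1 - cfc f a‖ := norm_mul_le _ _
      _ ≤ ‖w‖ := by
        rw [Unitization.norm_inr]
        exact mul_le_of_le_one_right (norm_nonneg _) hu1

lemma AddSubgroup.isClosed_add_of_forall_exists {E : Type*} [NormedAddCommGroup E]
    [CompleteSpace E] {I J : AddSubgroup E} (hI : IsClosed (I : Set E))
    (hJ : IsClosed (J : Set E)) {C : ℝ} (hC : 0 ≤ C)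
    (h : ∀ i ∈ I, ∀ j ∈ J, ∃ k ∈ I, k ∈ J ∧ ‖j - k‖ ≤ C * ‖i + j‖) :
    IsClosed ((I : Set E) + (J : Set E)) := by
  have : CompleteSpace I := hI.completeSpace_coe
  have : CompleteSpace J := hJ.completeSpace_coe
  have hsup : ((I ⊔ J : AddSubgroup E) : Set E) = I + J := by
    ext x
    simp [AddSubgroup.mem_sup, Set.mem_add]
  let add : NormedAddGroupHom (I × J) E := (I.subtype.coprod J.subtype).mkNormedAddGroupHom 2
    fun p => calc ‖(p.1 : E) + p.2‖ ≤ ‖p.1‖ + ‖p.2‖ := norm_add_le _ _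
      _ ≤ 2 * ‖p‖ := by linarith [norm_fst_le p, norm_snd_le p]
  have hlift : add.SurjectiveOnWith (I ⊔ J) (C + 1) := by
    rintro _ hx
    obtain ⟨i, hi, j, hj, rfl⟩ := AddSubgroup.mem_sup.mp hx
    obtain ⟨k, hkI, hkJ, hk⟩ := h i hi j hj
    refine ⟨(⟨i + k, add_mem hi hkI⟩, ⟨j - k, sub_mem hj hkJ⟩), ?_, ?_⟩
    · change (i + k) + (j - k) = i + j
      abel
    have hik : ‖i + k‖ ≤ (C + 1) * ‖i + j‖ := calc
      ‖i + k‖ = ‖(i + j) - (j - k)‖ := by congr 1; abel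
      _ ≤ ‖i + j‖ + ‖j - k‖ := norm_sub_le _ _
      _ ≤ (C + 1) * ‖i + j‖ := by linarith
    exact max_le hik (hk.trans (by nlinarith [norm_nonneg (i + j)]))
  refine isClosed_of_closure_subset fun x hx => ?_
  rw [← hsup, ← AddSubgroup.topologicalClosure_coe] at hx
  obtain ⟨⟨i, j⟩, hij, -⟩ := controlled_closure_of_complete (by linarith) one_pos hlift x hx
  exact hij ▸ Set.add_mem_add i.2 j.2

namespace TwoSidedIdeal

section Ring

variable {R : Type*} [NonUnitalNonAssocRing R]

lemma coe_sup (I J : TwoSidedIdeal R) : ((I ⊔ J : TwoSidedIdeal R) : Set R) = I + J := by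
  ext x
  simp [mem_sup, Set.mem_add]

variable {S : Type*} [SetLike S R] [NonUnitalSubringClass S R] (s : S)

lemma isClosed_comap_subtype [TopologicalSpace R] {I : TwoSidedIdeal R}
    (hI : IsClosed (I : Set R)) :
    IsClosed (I.comap (NonUnitalSubringClass.subtype s) : Set s) :=
  hI.preimage continuous_subtype_val

lemma mem_comap_subtype_sup_iff {I J : TwoSidedIdeal R} {x : s} :
    x ∈ I.comap (NonUnitalSubringClass.subtype s) ⊔ J.comap (NonUnitalSubringClass.subtype s) ↔
      (x : R) ∈ ((I : Set R) ∩ s) + ((J : Set R) ∩ s) := by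
  simp only [mem_sup, mem_comap, Set.mem_add]
  constructor
  · rintro ⟨y, hy, z, hz, rfl⟩
    exact ⟨y, ⟨hy, y.2⟩, z, ⟨hz, z.2⟩, rfl⟩
  · rintro ⟨y, ⟨hy, hys⟩, z, ⟨hz, hzs⟩, hyz⟩
    exact ⟨⟨y, hys⟩, hy, ⟨z, hzs⟩, hz, Subtype.ext hyz⟩

end Ring

section CStarAlgebra

variable {A : Type*} [NonUnitalCStarAlgebra A]

lemma exists_mem_mem_norm_sub_le {I J : TwoSidedIdeal A} {i j : A} (hi : i ∈ I) (hj : j ∈ J) :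
    ∃ k ∈ I, k ∈ J ∧ ‖j - k‖ ≤ 2 * ‖i + j‖ := by
  rcases eq_or_ne (i + j) 0 with hij | hij
  · refine ⟨j, ?_, hj, by simp⟩
    rw [eq_neg_of_add_eq_zero_right hij]
    exact I.neg_mem hi
  obtain ⟨v, happrox, hcontr⟩ := exists_norm_sub_mul_star_mul_self_mul_le i (norm_pos_iff.mpr hij)
  set u := star i * i * v
  have hu : u ∈ I := mul_mem_right _ _ _ (mul_mem_left _ _ _ hi)
  refine ⟨j * u, mul_mem_left _ _ _ hu, mul_mem_right _ _ _ hj, ?_⟩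
  calc ‖j - j * u‖ = ‖((i + j) - (i + j) * u) - (i - i * u)‖ := by congr 1; noncomm_ring
    _ ≤ ‖(i + j) - (i + j) * u‖ + ‖i - i * u‖ := norm_sub_le _ _
    _ ≤ 2 * ‖i + j‖ := by linarith [hcontr (i + j)]

lemma isClosed_sup {I J : TwoSidedIdeal A} (hI : IsClosed (I : Set A))
    (hJ : IsClosed (J : Set A)) : IsClosed ((I ⊔ J : TwoSidedIdeal A) : Set A) := by
  rw [coe_sup]
  exact AddSubgroup.isClosed_add_of_forall_exists (I := .ofClass I) (J := .ofClass J) hI hJ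
    zero_le_two fun i hi j hj => exists_mem_mem_norm_sub_le hi hj

end CStarAlgebra

end TwoSidedIdeal

theorem stmt11_general {B : Type*} [NonUnitalCStarAlgebra B]
    (C₁ C₂ : NonUnitalStarSubalgebra ℂ B)
    (hC₂ : IsClosed (C₂ : Set B))
    (h12 : (C₁ : Set B) ⊆ (C₂ : Set B))
    (hreg12 : IsRegularIn {x : C₂ | (x : B) ∈ C₁})
    (hreg1B : IsRegularIn (C₁ : Set B)) :
    IsRegularIn (C₂ : Set B) := by
  have trace_trace (K : Set B) : K ∩ C₂ ∩ C₁ = K ∩ C₁ := by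
    rw [Set.inter_assoc, Set.inter_eq_self_of_subset_right h12]
  refine ⟨fun I J hI hJ hIJ => hreg1B.1 I J hI hJ ?_, fun I J hI hJ => ?_⟩
  · rw [← trace_trace, hIJ, trace_trace]
  let tr : TwoSidedIdeal B → TwoSidedIdeal C₂ :=
    TwoSidedIdeal.comap (NonUnitalSubringClass.subtype C₂)
  have mem_tr_sup (x : C₂) : x ∈ tr I ⊔ tr J ↔ (x : B) ∈ ((I : Set B) ∩ C₂) + ((J : Set B) ∩ C₂) :=
    TwoSidedIdeal.mem_comap_subtype_sup_iff C₂
  have mem_tr (x : C₂) : x ∈ tr (I ⊔ J) ↔ (x : B) ∈ (I : Set B) + J := by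
    rw [TwoSidedIdeal.mem_comap, ← SetLike.mem_coe, TwoSidedIdeal.coe_sup]
    rfl
  have hsup_eq : tr I ⊔ tr J = tr (I ⊔ J) := by
    refine hreg12.1 _ _ (TwoSidedIdeal.isClosed_sup (TwoSidedIdeal.isClosed_comap_subtype C₂ hI)
        (TwoSidedIdeal.isClosed_comap_subtype C₂ hJ))
      (TwoSidedIdeal.isClosed_comap_subtype C₂ (TwoSidedIdeal.isClosed_sup hI hJ)) ?_
    ext x
    rw [Set.mem_inter_iff, Set.mem_inter_iff, SetLike.mem_coe, SetLike.mem_coe, mem_tr_sup,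
      mem_tr]
    refine and_congr_left fun hx => ⟨fun hx' => ?_, fun hx' => ?_⟩
    · exact Set.add_subset_add Set.inter_subset_left Set.inter_subset_left hx'
    · have : (x : B) ∈ ((I : Set B) + J) ∩ C₁ := ⟨hx', hx⟩
      rw [hreg1B.2 I J hI hJ] at this
      exact Set.add_subset_add (Set.inter_subset_inter_right _ h12)
        (Set.inter_subset_inter_right _ h12) this
  refine subset_antisymm (fun x hx => ?_) ?_
  · obtain ⟨hxIJ, hxC⟩ := hx
    exact (mem_tr_sup ⟨x, hxC⟩).mp (hsup_eq ▸ (mem_tr ⟨x, hxC⟩).mpr hxIJ)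
  · rintro _ ⟨y, ⟨hyI, hyC⟩, z, ⟨hzJ, hzC⟩, rfl⟩
    exact ⟨Set.add_mem_add hyI hzJ, add_mem hyC hzC⟩

/-- If `C₁ ⊆ C₂ ⊆ B` are sub-C*-algebras such that `C₁` is regular in `C₂`
and regular in `B`, then `C₂` is regular in `B`. -/
theorem stmt11 {B : Type*} [NonUnitalCStarAlgebra B]
    (C₁ C₂ : NonUnitalStarSubalgebra ℂ B)
    (hC₁ : IsClosed (C₁ : Set B)) (hC₂ : IsClosed (C₂ : Set B))
    (h12 : (C₁ : Set B) ⊆ (C₂ : Set B))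
    (hreg12 : IsRegularIn {x : C₂ | (x : B) ∈ C₁})
    (hreg1B : IsRegularIn (C₁ : Set B)) :
    IsRegularIn (C₂ : Set B) :=
  stmt11_general C₁ C₂ hC₂ h12 hreg12 hreg1B
end

section
/- Let Y and X be locally compact Hausdorff spaces with Y compact metrizable, and let λ : Y → X be a continuous surjection. Suppose that for every g ∈ C(Y) the function x ↦ sup{ |g(y)| : y ∈ λ⁻¹(x) } is continuous on X. Then λ is an open map. -/
/-! In a perfectly normal space every open set `U` is `{f > 0}` for a continuous `f ≥ 0`. The
image of `{f > 0}` under `λ` is the set of points where the supremum of `f` over the fibre is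
positive, which is open as soon as that supremum depends continuously on the point. -/

open Set

theorem IsOpen.exists_continuous_nonneg_setOf_pos_eq {Y : Type*} [TopologicalSpace Y]
    [PerfectlyNormalSpace Y] {U : Set Y} (hU : IsOpen U) :
    ∃ f : C(Y, ℝ), (∀ y, 0 ≤ f y) ∧ {y | 0 < f y} = U := by
  obtain ⟨f, hf_zero, hf_mem⟩ :=
    perfectlyNormalSpace_iff_forall_isClosed_preimage_zero.1 ‹_› Uᶜ hU.isClosed_compl
  refine ⟨f, fun y => (hf_mem y).1, ?_⟩
  ext y
  rw [mem_ofPred_eq, ← not_not (a := y ∈ U), ← mem_compl_iff, hf_zero, mem_preimage,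
    mem_singleton_iff, (hf_mem y).1.lt_iff_ne']

theorem image_setOf_pos_eq_setOf_sSup_pos {Y X : Type*} (lam : Y → X) {f : Y → ℝ}
    (hbdd : BddAbove (range f)) :
    lam '' {y | 0 < f y} = {x | 0 < sSup (f '' (lam ⁻¹' {x}))} := by
  ext x
  rcases (lam ⁻¹' {x}).eq_empty_or_nonempty with hfib | hfib
  -- over an empty fibre neither side holds, since `sSup ∅ = 0` in `ℝ`
  · simp only [hfib, image_empty, Real.sSup_empty, lt_irrefl, mem_ofPred_eq, iff_false]
    exact fun ⟨y, _, hy⟩ => eq_empty_iff_forall_notMem.1 hfib y hy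
  · rw [mem_ofPred_eq, lt_csSup_iff (hbdd.mono (image_subset_range _ _)) (hfib.image f)]
    simp only [mem_image, mem_ofPred_eq, exists_exists_and_eq_and]
    exact ⟨fun ⟨y, hy, hyx⟩ => ⟨y, hyx, hy⟩, fun ⟨y, hyx, hy⟩ => ⟨y, hy, hyx⟩⟩

theorem stmt19_general {Y X : Type*} [TopologicalSpace Y] [CompactSpace Y]
    [TopologicalSpace.MetrizableSpace Y]
    [TopologicalSpace X]
    (lam : Y → X)
    (hsup : ∀ g : C(Y, ℂ),
      Continuous fun x : X => sSup ((fun y => ‖g y‖) '' (lam ⁻¹' {x}))) :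
    IsOpenMap lam := by
  intro U hU
  obtain ⟨f, hf_nonneg, rfl⟩ := hU.exists_continuous_nonneg_setOf_pos_eq
  let g : C(Y, ℂ) := ⟨fun y => (f y : ℂ), by fun_prop⟩
  have hg : (fun y => ‖g y‖) = f := funext fun y => by simp [g, abs_of_nonneg (hf_nonneg y)]
  rw [image_setOf_pos_eq_setOf_sSup_pos lam (isCompact_range f.continuous).bddAbove]
  exact isOpen_lt continuous_const (hg ▸ hsup g)

/-- Let `λ : Y → X` be a continuous surjection from a compact metrizable space
onto a locally compact Hausdorff space. If for every `g ∈ C(Y)` the function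
`x ↦ sup { |g(y)| : y ∈ λ⁻¹(x) }` is continuous on `X`, then `λ` is an open map. -/
theorem stmt19 {Y X : Type*} [TopologicalSpace Y] [CompactSpace Y] [T2Space Y]
    [TopologicalSpace.MetrizableSpace Y]
    [TopologicalSpace X] [LocallyCompactSpace X] [T2Space X]
    (lam : Y → X) (hcont : Continuous lam) (hsurj : Function.Surjective lam)
    (hsup : ∀ g : C(Y, ℂ),
      Continuous fun x : X => sSup ((fun y => ‖g y‖) '' (lam ⁻¹' {x}))) :
    IsOpenMap lam :=
  stmt19_general lam hsup
end
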